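/- arXiv:2310.07226 — 2 statements merged into one kernel-verified Lean document; each statement's English description precedes it below -/
import Mathlib

section
/- If max_i ζ_j(x, ξ_i) exists for all j and x, and x* is a weakly efficient solution of the robust counterpart RC₁* (no x with F_j(x) < F_j(x*) for all j), then x* is a robust weakly efficient solution of P(U), i.e., there is no x ≠ x* with ζ(x; U) ⊆ ζ(x*; U) − ℝ^k_>. -/
/-- If the objective-wise maxima exist and `x*` is a weakly efficient solution of the robust
counterpart `RC₁*`, then `x*` is a robust weakly efficient solution of `P(U)`. -/
theorem stmt_1 {n m p : ℕ}
    (ζ : (Fin n → ℝ) → Fin p → (Fin m → ℝ))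
    (F : Fin m → (Fin n → ℝ) → ℝ)
    (hF : ∀ j x, IsGreatest (Set.range fun i => ζ x i j) (F j x))
    (xs : Fin n → ℝ)
    (hweff : ¬ ∃ x : Fin n → ℝ, ∀ j, F j x < F j xs) :
    ¬ ∃ x : Fin n → ℝ, x ≠ xs ∧ ∀ i : Fin p, ∃ i' : Fin p, ∀ j, ζ x i j < ζ xs i' j := by
  rintro ⟨x, hne, hdom⟩
  apply hweff
  refine ⟨x, fun j => ?_⟩
  obtain ⟨⟨i0, hi0⟩, hub⟩ := hF j x
  obtain ⟨i', hi'⟩ := hdom i0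
  calc F j x = ζ x i0 j := hi0.symm
    _ < ζ xs i' j := hi' j
    _ ≤ F j xs := (hF j xs).2 ⟨i', rfl⟩
end

section
/- If x is not a critical point of F (i.e., there exists s̄ ∈ ℝ^n with ∇ζ_j(x, ξ_i)^T s̄ < 0 for all j ∈ {1,…,m} and all active indices i ∈ I_j(x)), then the optimal value of the quasi-Newton subproblem is strictly negative: ϑ(x) < 0. -/
open scoped Matrix

private lemma aux_small (c a q : ℝ) (hc : c ≤ 0) (hq : 0 < q) (hca : c = 0 → a < 0) :
    ∃ ε > 0, ∀ δ : ℝ, 0 < δ → δ ≤ ε → c + δ * a + 1 / 2 * (δ ^ 2 * q) < 0 := by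
  rcases eq_or_lt_of_le hc with h0 | hneg
  · have ha : a < 0 := hca h0
    refine ⟨-a / q, div_pos (by linarith) hq, fun δ hδ hδε => ?_⟩
    have h1 : δ * q ≤ -a := (le_div_iff₀ hq).mp hδε
    nlinarith [mul_le_mul_of_nonneg_left h1 hδ.le]
  · set D : ℝ := |a| + q + 1 with hD
    have hDpos : 0 < D := by positivity
    refine ⟨min 1 (-c / D), lt_min one_pos (div_pos (by linarith) hDpos), fun δ hδ hδε => ?_⟩
    have hδ1 : δ ≤ 1 := hδε.trans (min_le_left _ _)
    have hδ2 : δ * D ≤ -c := by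
      have := hδε.trans (min_le_right _ _)
      rw [le_div_iff₀ hDpos] at this
      linarith
    have haa : a ≤ |a| := le_abs_self a
    nlinarith [abs_nonneg a, mul_le_mul_of_nonneg_left haa hδ.le,
      mul_le_mul_of_nonneg_left hδ1 (mul_pos hδ hq).le]

/-- If `x` is not a critical point of `F` (there is `s̄` with `∇ζ_j(x, ξ_i)ᵀ s̄ < 0` for all `j`
and all active `i`), then the optimal value of the quasi-Newton subproblem is negative. -/
theorem stmt_7 {n m p : ℕ}
    (ζ : Fin m → Fin p → ℝ)          -- values ζ_j(x, ξ_i)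
    (gv : Fin m → Fin p → Fin n → ℝ)  -- gradients ∇ζ_j(x, ξ_i)
    (H : Fin m → Fin p → Matrix (Fin n) (Fin n) ℝ)
    (hHsymm : ∀ j i, (H j i).IsSymm)
    (hHpd : ∀ j i, (H j i).PosDef)
    (F : Fin m → ℝ)
    (hF : ∀ j, IsGreatest (Set.range (ζ j)) (F j))
    (Θ : (Fin n → ℝ) → ℝ)
    (hΘ : ∀ s : Fin n → ℝ, IsGreatest
      (Set.range fun ji : Fin m × Fin p =>
        ζ ji.1 ji.2 + gv ji.1 ji.2 ⬝ᵥ s + (1 / 2) * (s ⬝ᵥ (H ji.1 ji.2).mulVec s) - F ji.1)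
      (Θ s))
    (ϑ : ℝ) (hϑ : IsLeast (Set.range Θ) ϑ)
    (hnoncrit : ∃ sbar : Fin n → ℝ, ∀ j i, ζ j i = F j → gv j i ⬝ᵥ sbar < 0) :
    ϑ < 0 := by
  obtain ⟨sbar, hsb⟩ := hnoncrit
  obtain ⟨ji0, -⟩ := (hΘ 0).1
  have hne : Nonempty (Fin m × Fin p) := ⟨ji0⟩
  obtain ⟨i0, hi0⟩ := (hF ji0.1).1
  have hsbne : sbar ≠ 0 := by
    intro h
    have := hsb ji0.1 i0 hi0
    rw [h] at this
    simp [dotProduct_zero] at this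
  have hq : ∀ j i, 0 < sbar ⬝ᵥ (H j i).mulVec sbar := by
    intro j i
    have := (hHpd j i).dotProduct_mulVec_pos hsbne
    simpa using this
  have hεall : ∀ ji : Fin m × Fin p, ∃ ε > 0, ∀ δ : ℝ, 0 < δ → δ ≤ ε →
      ζ ji.1 ji.2 - F ji.1 + δ * (gv ji.1 ji.2 ⬝ᵥ sbar)
        + 1 / 2 * (δ ^ 2 * (sbar ⬝ᵥ (H ji.1 ji.2).mulVec sbar)) < 0 := by
    intro ji
    exact aux_small _ _ _ (sub_nonpos.mpr ((hF ji.1).2 ⟨ji.2, rfl⟩)) (hq ji.1 ji.2)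
      (fun h => hsb ji.1 ji.2 (by linarith [sub_eq_zero.mp h]))
  choose ε hεpos hεprop using hεall
  set δ : ℝ := Finset.univ.inf' (Finset.univ_nonempty) ε with hδdef
  have hδpos : 0 < δ := by
    rw [hδdef]
    exact (Finset.lt_inf'_iff _).mpr fun ji _ => hεpos ji
  have hϑle : ϑ ≤ Θ (δ • sbar) := hϑ.2 ⟨δ • sbar, rfl⟩
  refine lt_of_le_of_lt hϑle ?_
  obtain ⟨ji, hji⟩ := (hΘ (δ • sbar)).1
  rw [← hji]
  have h1 : gv ji.1 ji.2 ⬝ᵥ (δ • sbar) = δ * (gv ji.1 ji.2 ⬝ᵥ sbar) := by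
    simp [dotProduct_smul]
  have h2 : (δ • sbar) ⬝ᵥ (H ji.1 ji.2).mulVec (δ • sbar)
      = δ ^ 2 * (sbar ⬝ᵥ (H ji.1 ji.2).mulVec sbar) := by
    rw [Matrix.mulVec_smul, smul_dotProduct, dotProduct_smul]
    ring_nf
  have key := hεprop ji δ hδpos (Finset.inf'_le _ (Finset.mem_univ ji))
  have hgoal : ζ ji.1 ji.2 + gv ji.1 ji.2 ⬝ᵥ (δ • sbar)
      + 1 / 2 * ((δ • sbar) ⬝ᵥ (H ji.1 ji.2).mulVec (δ • sbar)) - F ji.1 < 0 := by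
    rw [h1, h2]; linarith
  exact hgoal
end
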